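/- Let Ω = (0,R) × (−a,a) and ψ₁ a smooth solution of −ψ₁,rr − (3/r)ψ₁,r − ψ₁,zz = ω₁ with ψ₁ = 0 on r = R and z = ±a, and ψ₁,r vanishing at r = 0. Then 3 ∫_Ω |ψ₁,r / r|² r dr dz + (1/2) ∫_{−a}^a ψ₁,r(R,z)² dz + (1/2) ∫_{−a}^a ψ₁,z(0,z)² dz = −∫_Ω ω₁ (ψ₁,r / r) r dr dz, and consequently ∫_Ω |ψ₁,r/r|² r dr dz + ∫_{−a}^a (ψ₁,r(R,z)² + ψ₁,z(0,z)²) dz ≤ c ∫_Ω ω₁² r dr dz. -/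

import Mathlib

/-!
Multiplying the equation by `ψ,r = (ψ,r / r) · r` and integrating over the rectangle, every term
except `3 (ψ,r / r)² r` is an exact derivative. `ψ,r ψ,rr = ∂_r (ψ,r² / 2)` leaves only the
boundary term at `r = R`, since `ψ,r` vanishes on the axis. By symmetry of mixed partials,
`ψ,zz ψ,r = ∂_z (ψ,z ψ,r) - ψ,z ∂_r ψ,z`: the first part integrates to zero because `ψ,r = 0` on
`z = ±a` (where `ψ = 0`), the second to `-ψ,z(0, z)² / 2` because `ψ,z = 0` on `r = R`.
Fubini applies because every integrand is bounded on the rectangle: `|ψ,r| ≤ C r` by the mean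
value theorem and `ψ,r(0, z) = 0`. The estimate then follows from
`-ω q r ≤ (3/2) q² r + (1/6) ω² r` for `q = ψ,r / r`, i.e. from `(3 q + ω)² r ≥ 0`.
-/

open MeasureTheory Set

/-- Partial derivative in the first (radial) variable. -/
noncomputable def pdr (f : ℝ → ℝ → ℝ) : ℝ → ℝ → ℝ := fun r z => deriv (fun s => f s z) r

/-- Partial derivative in the second (axial) variable. -/
noncomputable def pdz (f : ℝ → ℝ → ℝ) : ℝ → ℝ → ℝ := fun r z => deriv (fun w => f r w) z

open Function

section PartialDerivatives

variable {f : ℝ → ℝ → ℝ} {r z : ℝ}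

theorem hasDerivAt_pdr (hf : DifferentiableAt ℝ (uncurry f) (r, z)) :
    HasDerivAt (fun s => f s z) (pdr f r z) r :=
  (DifferentiableAt.comp (g := uncurry f) (f := fun s => (s, z)) r hf
    (differentiableAt_id.prodMk (differentiableAt_const z))).hasDerivAt

theorem hasDerivAt_pdz (hf : DifferentiableAt ℝ (uncurry f) (r, z)) :
    HasDerivAt (fun w => f r w) (pdz f r z) z :=
  (DifferentiableAt.comp (g := uncurry f) z hf
    ((differentiableAt_const r).prodMk differentiableAt_id)).hasDerivAt

theorem pdr_eq_fderiv (hf : DifferentiableAt ℝ (uncurry f) (r, z)) :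
    pdr f r z = fderiv ℝ (uncurry f) (r, z) (1, 0) :=
  (hasDerivAt_pdr hf).unique <| by
    simpa [comp_def] using hf.hasFDerivAt.comp_hasDerivAt r
      ((hasDerivAt_id r).prodMk (hasDerivAt_const r z))

theorem pdz_eq_fderiv (hf : DifferentiableAt ℝ (uncurry f) (r, z)) :
    pdz f r z = fderiv ℝ (uncurry f) (r, z) (0, 1) :=
  (hasDerivAt_pdz hf).unique <| by
    simpa [comp_def] using hf.hasFDerivAt.comp_hasDerivAt z
      ((hasDerivAt_const z r).prodMk (hasDerivAt_id z))

theorem uncurry_pdr_eq_fderiv (hf : Differentiable ℝ (uncurry f)) :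
    uncurry (pdr f) = fun p => fderiv ℝ (uncurry f) p (1, 0) :=
  funext fun p => pdr_eq_fderiv (hf p)

theorem uncurry_pdz_eq_fderiv (hf : Differentiable ℝ (uncurry f)) :
    uncurry (pdz f) = fun p => fderiv ℝ (uncurry f) p (0, 1) :=
  funext fun p => pdz_eq_fderiv (hf p)

variable {m n : WithTop ℕ∞}

theorem ContDiff.uncurry_pdr (hf : ContDiff ℝ n (uncurry f)) (hmn : m + 1 ≤ n) :
    ContDiff ℝ m (uncurry (pdr f)) := by
  rw [uncurry_pdr_eq_fderiv (hf.differentiable (by rintro rfl; simp at hmn))]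
  exact (hf.fderiv_right hmn).clm_apply contDiff_const

theorem ContDiff.uncurry_pdz (hf : ContDiff ℝ n (uncurry f)) (hmn : m + 1 ≤ n) :
    ContDiff ℝ m (uncurry (pdz f)) := by
  rw [uncurry_pdz_eq_fderiv (hf.differentiable (by rintro rfl; simp at hmn))]
  exact (hf.fderiv_right hmn).clm_apply contDiff_const

theorem ContDiff.continuous_uncurry_pdr (hf : ContDiff ℝ 1 (uncurry f)) :
    Continuous (uncurry (pdr f)) :=
  (hf.uncurry_pdr (m := 0) (by simp)).continuous

theorem ContDiff.continuous_uncurry_pdz (hf : ContDiff ℝ 1 (uncurry f)) :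
    Continuous (uncurry (pdz f)) :=
  (hf.uncurry_pdz (m := 0) (by simp)).continuous

theorem pdr_pdz_comm (hf : ContDiff ℝ 2 (uncurry f)) (r z : ℝ) :
    pdr (pdz f) r z = pdz (pdr f) r z := by
  have hf1 : Differentiable ℝ (uncurry f) := hf.differentiable two_ne_zero
  have hf2 : DifferentiableAt ℝ (fderiv ℝ (uncurry f)) (r, z) :=
    (hf.fderiv_right (m := 1) (by norm_num)).differentiable one_ne_zero _
  rw [pdr_eq_fderiv ((hf.uncurry_pdz (m := 1) (by norm_num)).differentiable one_ne_zero _),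
    pdz_eq_fderiv ((hf.uncurry_pdr (m := 1) (by norm_num)).differentiable one_ne_zero _),
    uncurry_pdz_eq_fderiv hf1, uncurry_pdr_eq_fderiv hf1,
    fderiv_clm_apply hf2 (differentiableAt_const _),
    fderiv_clm_apply hf2 (differentiableAt_const _)]
  simpa using (hf.contDiffAt (x := (r, z)).isSymmSndFDerivAt (by simp)) (1, 0) (0, 1)

end PartialDerivatives

section OneVariable

variable {f g f' g' : ℝ → ℝ} {c d : ℝ}

theorem integral_Ioo_deriv_mul_add (hcd : c ≤ d) (hf : ∀ x, HasDerivAt f (f' x) x)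
    (hg : ∀ x, HasDerivAt g (g' x) x) (hf' : Continuous f') (hg' : Continuous g') :
    ∫ x in Ioo c d, (f' x * g x + f x * g' x) = f d * g d - f c * g c := by
  rw [← integral_Ioc_eq_integral_Ioo, ← intervalIntegral.integral_of_le hcd]
  exact intervalIntegral.integral_deriv_mul_eq_sub (fun x _ => hf x) (fun x _ => hg x)
    (hf'.intervalIntegrable _ _) (hg'.intervalIntegrable _ _)

theorem integral_Ioo_mul_deriv_self (hcd : c ≤ d) (hg : ∀ x, HasDerivAt g (g' x) x)
    (hg' : Continuous g') :
    ∫ x in Ioo c d, g x * g' x = (g d ^ 2 - g c ^ 2) / 2 := by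
  have h := integral_Ioo_deriv_mul_add hcd hg hg hg' hg'
  have h2 : ∀ x, g' x * g x + g x * g' x = 2 * (g x * g' x) := fun x => by ring
  simp_rw [h2, integral_const_mul] at h
  linarith

theorem deriv_eq_zero_of_forall_mem_eq_zero {s : Set ℝ} {x : ℝ} (hs : s ∈ nhds x)
    (hg : ∀ y ∈ s, g y = 0) : deriv g x = 0 :=
  (Filter.eventuallyEq_of_mem hs hg).deriv_eq.trans (deriv_const x 0)

theorem abs_div_le_of_abs_deriv_le {R M r : ℝ} (hg : ∀ x ∈ Icc 0 R, HasDerivAt g (g' x) x)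
    (hg0 : g 0 = 0) (hM : ∀ x ∈ Icc 0 R, |g' x| ≤ M) (hr : r ∈ Ioc 0 R) : |g r / r| ≤ M := by
  have h := norm_image_sub_le_of_norm_deriv_le_segment' (fun x hx => (hg x hx).hasDerivWithinAt)
    (fun x hx => hM x (Ico_subset_Icc_self hx)) r (Ioc_subset_Icc_self hr)
  rw [abs_div, abs_of_pos hr.1, div_le_iff₀ hr.1]
  simpa [hg0] using h

end OneVariable

section Rectangles

variable {F : ℝ × ℝ → ℝ} {r₁ r₂ z₁ z₂ : ℝ}

theorem Continuous.integrableOn_Ioo_prod_Ioo (hF : Continuous F) :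
    IntegrableOn F (Ioo r₁ r₂ ×ˢ Ioo z₁ z₂) :=
  (hF.continuousOn.integrableOn_compact (isCompact_Icc.prod isCompact_Icc)).mono_set
    (prod_mono Ioo_subset_Icc_self Ioo_subset_Icc_self)

theorem integrableOn_Ioo_prod_Ioo_of_abs_le {C : ℝ}
    (hF : ContinuousOn F (Ioo r₁ r₂ ×ˢ Ioo z₁ z₂)) (hC : ∀ p ∈ Ioo r₁ r₂ ×ˢ Ioo z₁ z₂, |F p| ≤ C) :
    IntegrableOn F (Ioo r₁ r₂ ×ˢ Ioo z₁ z₂) :=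
  IntegrableOn.of_bound
    (by simp [Measure.volume_eq_prod, Measure.prod_prod, ENNReal.mul_lt_top])
    (hF.aestronglyMeasurable (measurableSet_Ioo.prod measurableSet_Ioo)) C
    ((ae_restrict_iff' (measurableSet_Ioo.prod measurableSet_Ioo)).2 (.of_forall hC))

theorem setIntegral_Ioo_prod_Ioo (hF : IntegrableOn F (Ioo r₁ r₂ ×ˢ Ioo z₁ z₂)) :
    ∫ p in Ioo r₁ r₂ ×ˢ Ioo z₁ z₂, F p = ∫ z in Ioo z₁ z₂, ∫ r in Ioo r₁ r₂, F (r, z) := by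
  rw [Measure.volume_eq_prod, ← Measure.prod_restrict]
  rw [IntegrableOn, Measure.volume_eq_prod, ← Measure.prod_restrict] at hF
  exact integral_prod_symm F hF

end Rectangles

theorem abs_mul_mul_le {x y t M N T : ℝ} (hx : |x| ≤ M) (hy : |y| ≤ N) (ht : t ∈ Ioo 0 T) :
    |x * y * t| ≤ M * N * T := by
  rw [abs_mul, abs_mul, abs_of_pos ht.1]
  have hM := (abs_nonneg x).trans hx
  exact mul_le_mul (mul_le_mul hx hy (abs_nonneg y) hM) ht.2.le ht.1.le
    (mul_nonneg hM ((abs_nonneg y).trans hy))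

theorem abs_sq_mul_le {x t M T : ℝ} (hx : |x| ≤ M) (ht : t ∈ Ioo 0 T) :
    |x ^ 2 * t| ≤ M ^ 2 * T := by
  simpa only [sq] using abs_mul_mul_le hx hx ht

section Cylinder

variable {R a : ℝ} {ψ ω : ℝ → ℝ → ℝ}

theorem exists_bound_pdr_div (hψ : ContDiff ℝ 2 (uncurry ψ))
    (haxis : ∀ z ∈ Icc (-a) a, pdr ψ 0 z = 0) :
    ∃ M, ∀ p ∈ Ioo 0 R ×ˢ Ioo (-a) a, |pdr ψ p.1 p.2 / p.1| ≤ M ∧ |pdr (pdr ψ) p.1 p.2| ≤ M ∧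
      |pdz (pdz ψ) p.1 p.2| ≤ M := by
  have hu := hψ.uncurry_pdr (m := 1) (by norm_num)
  have hv := hψ.uncurry_pdz (m := 1) (by norm_num)
  obtain ⟨M, hM⟩ := (isCompact_Icc.prod isCompact_Icc).exists_bound_of_continuousOn
    (s := Icc 0 R ×ˢ Icc (-a) a) (Continuous.continuousOn (f := fun p : ℝ × ℝ =>
      (pdr (pdr ψ) p.1 p.2, pdz (pdz ψ) p.1 p.2))
      (hu.continuous_uncurry_pdr.prodMk hv.continuous_uncurry_pdz))
  refine ⟨M, fun p ⟨hr, hz⟩ => ⟨?_, ?_, ?_⟩⟩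
  · exact abs_div_le_of_abs_deriv_le (g := fun s => pdr ψ s p.2)
      (fun x _ => hasDerivAt_pdr (hu.differentiable one_ne_zero _))
      (haxis p.2 (Ioo_subset_Icc_self hz))
      (fun x hx => (norm_fst_le _).trans (hM (x, p.2) ⟨hx, Ioo_subset_Icc_self hz⟩))
      ⟨hr.1, hr.2.le⟩
  · exact (norm_fst_le _).trans (hM p ⟨Ioo_subset_Icc_self hr, Ioo_subset_Icc_self hz⟩)
  · exact (norm_snd_le _).trans (hM p ⟨Ioo_subset_Icc_self hr, Ioo_subset_Icc_self hz⟩)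

theorem integrableOn_sq_pdr_div_mul (hψ : ContDiff ℝ 2 (uncurry ψ))
    (haxis : ∀ z ∈ Icc (-a) a, pdr ψ 0 z = 0) :
    IntegrableOn (fun p : ℝ × ℝ => (pdr ψ p.1 p.2 / p.1) ^ 2 * p.1) (Ioo 0 R ×ˢ Ioo (-a) a) := by
  obtain ⟨M, hM⟩ := exists_bound_pdr_div hψ haxis
  refine integrableOn_Ioo_prod_Ioo_of_abs_le (C := M ^ 2 * R) ?_
    fun p hp => abs_sq_mul_le (hM p hp).1 hp.1
  have hu := (hψ.uncurry_pdr (m := 1) (by norm_num)).continuous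
  exact ((hu.continuousOn.div continuous_fst.continuousOn fun p hp => hp.1.1.ne').pow 2).mul
    continuous_fst.continuousOn

theorem continuousOn_uncurry_of_pde (hψ : ContDiff ℝ 2 (uncurry ψ))
    (hpde : ∀ r ∈ Ioo 0 R, ∀ z ∈ Ioo (-a) a,
      -(pdr (pdr ψ) r z) - 3 / r * pdr ψ r z - pdz (pdz ψ) r z = ω r z) :
    ContinuousOn (uncurry ω) (Ioo 0 R ×ˢ Ioo (-a) a) := by
  have hu := hψ.uncurry_pdr (m := 1) (by norm_num)
  have hv := hψ.uncurry_pdz (m := 1) (by norm_num)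
  refine ContinuousOn.congr (f := fun p : ℝ × ℝ =>
    -(pdr (pdr ψ) p.1 p.2) - 3 / p.1 * pdr ψ p.1 p.2 - pdz (pdz ψ) p.1 p.2) ?_
    fun p hp => (hpde p.1 hp.1 p.2 hp.2).symm
  exact ((hu.continuous_uncurry_pdr.continuousOn.neg.sub
    ((continuousOn_const.div continuous_fst.continuousOn fun p hp => hp.1.1.ne').mul
      hu.continuous.continuousOn)).sub hv.continuous_uncurry_pdz.continuousOn)

theorem exists_bound_of_pde (hψ : ContDiff ℝ 2 (uncurry ψ))
    (hpde : ∀ r ∈ Ioo 0 R, ∀ z ∈ Ioo (-a) a,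
      -(pdr (pdr ψ) r z) - 3 / r * pdr ψ r z - pdz (pdz ψ) r z = ω r z)
    (haxis : ∀ z ∈ Icc (-a) a, pdr ψ 0 z = 0) :
    ∃ M, ∀ p ∈ Ioo 0 R ×ˢ Ioo (-a) a, |pdr ψ p.1 p.2 / p.1| ≤ M ∧ |ω p.1 p.2| ≤ M := by
  obtain ⟨M, hM⟩ := exists_bound_pdr_div hψ haxis
  refine ⟨5 * M, fun p hp => ?_⟩
  obtain ⟨hq, hrr, hzz⟩ := hM p hp
  have hM0 : 0 ≤ M := (abs_nonneg _).trans hq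
  have hω : ω p.1 p.2 =
      -(pdr (pdr ψ) p.1 p.2) - 3 * (pdr ψ p.1 p.2 / p.1) - pdz (pdz ψ) p.1 p.2 := by
    rw [← hpde p.1 hp.1 p.2 hp.2]
    ring
  rw [abs_le] at hq hrr hzz
  refine ⟨by rw [abs_le]; constructor <;> linarith, ?_⟩
  rw [hω, abs_le]
  constructor <;> linarith

theorem integrableOn_sq_mul_of_pde (hψ : ContDiff ℝ 2 (uncurry ψ))
    (hpde : ∀ r ∈ Ioo 0 R, ∀ z ∈ Ioo (-a) a,
      -(pdr (pdr ψ) r z) - 3 / r * pdr ψ r z - pdz (pdz ψ) r z = ω r z)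
    (haxis : ∀ z ∈ Icc (-a) a, pdr ψ 0 z = 0) :
    IntegrableOn (fun p : ℝ × ℝ => ω p.1 p.2 ^ 2 * p.1) (Ioo 0 R ×ˢ Ioo (-a) a) := by
  obtain ⟨M, hM⟩ := exists_bound_of_pde hψ hpde haxis
  exact integrableOn_Ioo_prod_Ioo_of_abs_le (C := M ^ 2 * R)
    (((continuousOn_uncurry_of_pde hψ hpde).pow 2).mul continuous_fst.continuousOn)
    fun p hp => abs_sq_mul_le (hM p hp).2 hp.1

theorem integrableOn_mul_pdr_div_mul_of_pde (hψ : ContDiff ℝ 2 (uncurry ψ))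
    (hpde : ∀ r ∈ Ioo 0 R, ∀ z ∈ Ioo (-a) a,
      -(pdr (pdr ψ) r z) - 3 / r * pdr ψ r z - pdz (pdz ψ) r z = ω r z)
    (haxis : ∀ z ∈ Icc (-a) a, pdr ψ 0 z = 0) :
    IntegrableOn (fun p : ℝ × ℝ => ω p.1 p.2 * (pdr ψ p.1 p.2 / p.1) * p.1)
      (Ioo 0 R ×ˢ Ioo (-a) a) := by
  obtain ⟨M, hM⟩ := exists_bound_of_pde hψ hpde haxis
  have hu := (hψ.uncurry_pdr (m := 1) (by norm_num)).continuous
  exact integrableOn_Ioo_prod_Ioo_of_abs_le (C := M * M * R)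
    (((continuousOn_uncurry_of_pde hψ hpde).mul (hu.continuousOn.div continuous_fst.continuousOn
      fun p hp => hp.1.1.ne')).mul continuous_fst.continuousOn)
    fun p hp => abs_mul_mul_le (hM p hp).2 (hM p hp).1 hp.1

theorem mul_pdr_div_mul_eq_of_pde (hψ : ContDiff ℝ 2 (uncurry ψ)) {r z : ℝ} (hr : r ≠ 0)
    (hpde : -(pdr (pdr ψ) r z) - 3 / r * pdr ψ r z - pdz (pdz ψ) r z = ω r z) :
    ω r z * (pdr ψ r z / r) * r =
      -(pdr ψ r z * pdr (pdr ψ) r z) - 3 * ((pdr ψ r z / r) ^ 2 * r)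
        - (pdz (pdz ψ) r z * pdr ψ r z + pdz ψ r z * pdz (pdr ψ) r z)
        + pdz ψ r z * pdr (pdz ψ) r z := by
  rw [← hpde, pdr_pdz_comm hψ]
  field_simp
  ring

theorem setIntegral_pdr_mul_pdr_pdr (hR : 0 ≤ R) (hψ : ContDiff ℝ 2 (uncurry ψ))
    (haxis : ∀ z ∈ Icc (-a) a, pdr ψ 0 z = 0) :
    ∫ p in Ioo 0 R ×ˢ Ioo (-a) a, pdr ψ p.1 p.2 * pdr (pdr ψ) p.1 p.2 =
      1 / 2 * ∫ z in Ioo (-a) a, pdr ψ R z ^ 2 := by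
  have hu := hψ.uncurry_pdr (m := 1) (by norm_num)
  have hur := hu.continuous_uncurry_pdr
  rw [setIntegral_Ioo_prod_Ioo, ← integral_const_mul]
  · refine setIntegral_congr_fun measurableSet_Ioo fun z hz => ?_
    rw [integral_Ioo_mul_deriv_self hR (fun r => hasDerivAt_pdr (hu.differentiable one_ne_zero _))
      (hur.uncurry_right z), haxis z (Ioo_subset_Icc_self hz)]
    ring
  · exact (hu.continuous.mul hur).integrableOn_Ioo_prod_Ioo

theorem setIntegral_pdz_mul_pdr_pdz (hR : 0 ≤ R) (hψ : ContDiff ℝ 2 (uncurry ψ))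
    (hbR : ∀ z ∈ Icc (-a) a, ψ R z = 0) :
    ∫ p in Ioo 0 R ×ˢ Ioo (-a) a, pdz ψ p.1 p.2 * pdr (pdz ψ) p.1 p.2 =
      -(1 / 2 * ∫ z in Ioo (-a) a, pdz ψ 0 z ^ 2) := by
  have hv := hψ.uncurry_pdz (m := 1) (by norm_num)
  have hvr := hv.continuous_uncurry_pdr
  rw [setIntegral_Ioo_prod_Ioo, ← integral_const_mul, ← integral_neg]
  · refine setIntegral_congr_fun measurableSet_Ioo fun z hz => ?_
    have hvR : pdz ψ R z = 0 :=
      deriv_eq_zero_of_forall_mem_eq_zero (Icc_mem_nhds hz.1 hz.2) hbR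
    rw [integral_Ioo_mul_deriv_self hR (fun r => hasDerivAt_pdr (hv.differentiable one_ne_zero _))
      (hvr.uncurry_right z), hvR]
    ring
  · exact (hv.continuous.mul hvr).integrableOn_Ioo_prod_Ioo

theorem setIntegral_pdz_pdz_mul_add_eq_zero (ha : 0 ≤ a) (hψ : ContDiff ℝ 2 (uncurry ψ))
    (hba : ∀ r ∈ Icc 0 R, ψ r a = 0 ∧ ψ r (-a) = 0) :
    ∫ p in Ioo 0 R ×ˢ Ioo (-a) a,
      (pdz (pdz ψ) p.1 p.2 * pdr ψ p.1 p.2 + pdz ψ p.1 p.2 * pdz (pdr ψ) p.1 p.2) = 0 := by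
  have hu := hψ.uncurry_pdr (m := 1) (by norm_num)
  have hv := hψ.uncurry_pdz (m := 1) (by norm_num)
  have hvz := hv.continuous_uncurry_pdz
  have huz := hu.continuous_uncurry_pdz
  rw [Measure.volume_eq_prod, setIntegral_prod]
  · refine setIntegral_eq_zero_of_forall_eq_zero fun r hr => ?_
    have hua : pdr ψ r a = 0 :=
      deriv_eq_zero_of_forall_mem_eq_zero (Icc_mem_nhds hr.1 hr.2) fun s hs => (hba s hs).1
    have hua' : pdr ψ r (-a) = 0 :=
      deriv_eq_zero_of_forall_mem_eq_zero (Icc_mem_nhds hr.1 hr.2) fun s hs => (hba s hs).2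
    rw [integral_Ioo_deriv_mul_add (by linarith) (fun z => hasDerivAt_pdz (hv.differentiable
      one_ne_zero _)) (fun z => hasDerivAt_pdz (hu.differentiable one_ne_zero _))
      (hvz.uncurry_left r) (huz.uncurry_left r), hua, hua']
    ring
  · exact ((hvz.mul hu.continuous).add (hv.continuous.mul huz)).integrableOn_Ioo_prod_Ioo

theorem integral_integral_mul_pdr_div_mul_eq (hR : 0 ≤ R) (ha : 0 ≤ a)
    (hψ : ContDiff ℝ 2 (uncurry ψ))
    (hpde : ∀ r ∈ Ioo 0 R, ∀ z ∈ Ioo (-a) a,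
      -(pdr (pdr ψ) r z) - 3 / r * pdr ψ r z - pdz (pdz ψ) r z = ω r z)
    (hbR : ∀ z ∈ Icc (-a) a, ψ R z = 0)
    (hba : ∀ r ∈ Icc 0 R, ψ r a = 0 ∧ ψ r (-a) = 0)
    (haxis : ∀ z ∈ Icc (-a) a, pdr ψ 0 z = 0) :
    ∫ z in Ioo (-a) a, ∫ r in Ioo (0:ℝ) R, ω r z * (pdr ψ r z / r) * r =
      -((3 * ∫ z in Ioo (-a) a, ∫ r in Ioo (0:ℝ) R, (pdr ψ r z / r) ^ 2 * r)
        + 1 / 2 * (∫ z in Ioo (-a) a, (pdr ψ R z) ^ 2)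
        + 1 / 2 * (∫ z in Ioo (-a) a, (pdz ψ 0 z) ^ 2)) := by
  have hu := hψ.uncurry_pdr (m := 1) (by norm_num)
  have hv := hψ.uncurry_pdz (m := 1) (by norm_num)
  have hK := integrableOn_sq_pdr_div_mul (R := R) hψ haxis
  have hA : IntegrableOn (fun p : ℝ × ℝ => pdr ψ p.1 p.2 * pdr (pdr ψ) p.1 p.2)
      (Ioo 0 R ×ˢ Ioo (-a) a) :=
    (hu.continuous.mul hu.continuous_uncurry_pdr).integrableOn_Ioo_prod_Ioo
  have hP : IntegrableOn (fun p : ℝ × ℝ =>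
      pdz (pdz ψ) p.1 p.2 * pdr ψ p.1 p.2 + pdz ψ p.1 p.2 * pdz (pdr ψ) p.1 p.2)
      (Ioo 0 R ×ˢ Ioo (-a) a) :=
    ((hv.continuous_uncurry_pdz.mul hu.continuous).add
      (hv.continuous.mul hu.continuous_uncurry_pdz)).integrableOn_Ioo_prod_Ioo
  have hD : IntegrableOn (fun p : ℝ × ℝ => pdz ψ p.1 p.2 * pdr (pdz ψ) p.1 p.2)
      (Ioo 0 R ×ˢ Ioo (-a) a) :=
    (hv.continuous.mul hv.continuous_uncurry_pdr).integrableOn_Ioo_prod_Ioo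
  rw [← setIntegral_Ioo_prod_Ioo hK,
    ← setIntegral_Ioo_prod_Ioo (integrableOn_mul_pdr_div_mul_of_pde hψ hpde haxis),
    setIntegral_congr_fun (measurableSet_Ioo.prod measurableSet_Ioo) fun p hp =>
      mul_pdr_div_mul_eq_of_pde hψ hp.1.1.ne' (hpde _ hp.1 _ hp.2),
    integral_add ?_ hD, integral_sub ?_ hP, integral_sub ?_ (hK.const_mul 3),
    integral_neg, integral_const_mul, setIntegral_pdr_mul_pdr_pdr hR hψ haxis,
    setIntegral_pdz_pdz_mul_add_eq_zero ha hψ hba, setIntegral_pdz_mul_pdr_pdz hR hψ hbR]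
  · ring
  · exact hA.neg
  · exact hA.neg.sub (hK.const_mul 3)
  · exact (hA.neg.sub (hK.const_mul 3)).sub hP

theorem neg_integral_integral_mul_pdr_div_mul_le (hψ : ContDiff ℝ 2 (uncurry ψ))
    (hpde : ∀ r ∈ Ioo 0 R, ∀ z ∈ Ioo (-a) a,
      -(pdr (pdr ψ) r z) - 3 / r * pdr ψ r z - pdz (pdz ψ) r z = ω r z)
    (haxis : ∀ z ∈ Icc (-a) a, pdr ψ 0 z = 0) :
    -∫ z in Ioo (-a) a, ∫ r in Ioo (0:ℝ) R, ω r z * (pdr ψ r z / r) * r ≤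
      3 / 2 * (∫ z in Ioo (-a) a, ∫ r in Ioo (0:ℝ) R, (pdr ψ r z / r) ^ 2 * r)
        + 1 / 6 * ∫ z in Ioo (-a) a, ∫ r in Ioo (0:ℝ) R, (ω r z) ^ 2 * r := by
  have hK := integrableOn_sq_pdr_div_mul (R := R) hψ haxis
  have hW := integrableOn_mul_pdr_div_mul_of_pde hψ hpde haxis
  have hΩ := integrableOn_sq_mul_of_pde hψ hpde haxis
  rw [← setIntegral_Ioo_prod_Ioo hK, ← setIntegral_Ioo_prod_Ioo hW,
    ← setIntegral_Ioo_prod_Ioo hΩ, ← integral_neg, ← integral_const_mul, ← integral_const_mul,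
    ← integral_add (hK.const_mul _) (hΩ.const_mul _)]
  refine setIntegral_mono_on hW.neg ((hK.const_mul _).add (hΩ.const_mul _))
    (measurableSet_Ioo.prod measurableSet_Ioo) fun p hp => ?_
  nlinarith [mul_nonneg (sq_nonneg (3 * (pdr ψ p.1 p.2 / p.1) + ω p.1 p.2)) hp.1.1.le]

end Cylinder

/-- Identity (3.44) and the resulting estimate from Lemma 3.8. -/
theorem identity_344 (R a : ℝ) (hR : 0 < R) (ha : 0 < a)
    (ψ ω : ℝ → ℝ → ℝ)
    (hsm : ContDiff ℝ (⊤ : ℕ∞) (Function.uncurry ψ))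
    (hpde : ∀ r ∈ Ioo 0 R, ∀ z ∈ Ioo (-a) a,
      -(pdr (pdr ψ) r z) - 3 / r * pdr ψ r z - pdz (pdz ψ) r z = ω r z)
    (hbR : ∀ z ∈ Icc (-a) a, ψ R z = 0)
    (hba : ∀ r ∈ Icc 0 R, ψ r a = 0 ∧ ψ r (-a) = 0)
    (haxis : ∀ z ∈ Icc (-a) a, pdr ψ 0 z = 0) :
    (3 * ∫ z in Ioo (-a) a, ∫ r in Ioo (0:ℝ) R, (pdr ψ r z / r) ^ 2 * r)
      + (1 / 2) * (∫ z in Ioo (-a) a, (pdr ψ R z) ^ 2)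
      + (1 / 2) * (∫ z in Ioo (-a) a, (pdz ψ 0 z) ^ 2)
      = -∫ z in Ioo (-a) a, ∫ r in Ioo (0:ℝ) R, ω r z * (pdr ψ r z / r) * r ∧
    ∃ c > (0:ℝ),
      (∫ z in Ioo (-a) a, ∫ r in Ioo (0:ℝ) R, (pdr ψ r z / r) ^ 2 * r)
        + (∫ z in Ioo (-a) a, ((pdr ψ R z) ^ 2 + (pdz ψ 0 z) ^ 2))
        ≤ c * ∫ z in Ioo (-a) a, ∫ r in Ioo (0:ℝ) R, (ω r z) ^ 2 * r := by
  have hψ : ContDiff ℝ 2 (uncurry ψ) := hsm.of_le (WithTop.coe_le_coe.2 le_top)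
  have hid := integral_integral_mul_pdr_div_mul_eq hR.le ha.le hψ hpde hbR hba haxis
  have hyoung := neg_integral_integral_mul_pdr_div_mul_le hψ hpde haxis
  refine ⟨by rw [hid, neg_neg], 1 / 3, by norm_num, ?_⟩
  have hK : 0 ≤ ∫ z in Ioo (-a) a, ∫ r in Ioo (0:ℝ) R, (pdr ψ r z / r) ^ 2 * r :=
    setIntegral_nonneg measurableSet_Ioo fun z _ =>
      setIntegral_nonneg measurableSet_Ioo fun r hr => mul_nonneg (sq_nonneg _) hr.1.le
  have hu : Continuous fun z => pdr ψ R z ^ 2 :=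
    ((hψ.uncurry_pdr (m := 1) (by norm_num)).continuous.uncurry_left R).pow 2
  have hv : Continuous fun z => pdz ψ 0 z ^ 2 :=
    ((hψ.uncurry_pdz (m := 1) (by norm_num)).continuous.uncurry_left 0).pow 2
  rw [integral_add (hu.integrableOn_Icc.mono_set Ioo_subset_Icc_self)
    (hv.integrableOn_Icc.mono_set Ioo_subset_Icc_self)]
  linarith
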